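/- d_MP(T1,T2) = 0 if and only if T1 = T2 (up to isomorphism as X-trees). -/

import Mathlib

/-!
Parsimony scores are invariant under isomorphism, so isomorphic trees are at distance zero.
Conversely, the binary character of a set `A` of taxa has score one exactly when `A` is a split
of the tree (every edge side contains a taxon, as internal vertices have degree at least three),
so trees with equal scores display the same splits. A tree is recovered from its splits: two
oriented edges `b → w` and `v → a` are consecutive (`w = v`, `a ≠ b`) exactly when, among all
splits, the split of `b → w` covers that of `v → a`. Hence matching the tails of oriented edges
with equal splits is a bijection of vertices preserving adjacency and the leaf labels.
-/

/-- A phylogenetic `X`-tree: a finite tree together with an injective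
labelling of the taxa `X` by vertices. -/
structure PhyloTree (X : Type) where
  V : Type
  [fintypeV : Fintype V]
  G : SimpleGraph V
  connected : G.Connected
  acyclic : G.IsAcyclic
  leaf : X ↪ V

namespace PhyloTree

variable {X : Type}

/-- `g` extends the character `f` to all vertices of the tree. -/
def IsExtension {C : Type} (T : PhyloTree X) (f : X → C) (g : T.V → C) : Prop :=
  ∀ x, g (T.leaf x) = f x

/-- The number of edges whose endpoints receive different states under `g`. -/
noncomputable def mutCount {C : Type} (T : PhyloTree X) (g : T.V → C) : ℕ :=
  Set.ncard { e | e ∈ T.G.edgeSet ∧ ∃ u v : T.V, e = s(u, v) ∧ g u ≠ g v }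

/-- The parsimony score `l_f(T)` of a character `f` on the tree `T`. -/
noncomputable def score {C : Type} (T : PhyloTree X) (f : X → C) : ℕ :=
  sInf { n | ∃ g : T.V → C, T.IsExtension f g ∧ T.mutCount g = n }

/-- The Maximum Parsimony distance `d_MP(T₁,T₂) = max_f |l_f(T₁) - l_f(T₂)|`. -/
noncomputable def dMP (T₁ T₂ : PhyloTree X) : ℕ :=
  sSup { n | ∃ f : X → ℕ, n = ((T₁.score f : ℤ) - (T₂.score f : ℤ)).natAbs }

end PhyloTree

/-- Isomorphism of phylogenetic `X`-trees: a graph isomorphism commuting with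
the leaf labelling. -/
def PhyloTree.Isom {X : Type} (T₁ T₂ : PhyloTree X) : Prop :=
  ∃ e : T₁.V ≃ T₂.V,
    (∀ u v : T₁.V, T₁.G.Adj u v ↔ T₂.G.Adj (e u) (e v)) ∧
    ∀ x, e (T₁.leaf x) = T₂.leaf x

/-- `T` is a genuine phylogenetic `X`-tree: the taxa are exactly the leaves
(degree-1 vertices) and every internal vertex has degree at least 3. -/
def PhyloTree.IsPhylo {X : Type} (T : PhyloTree X) : Prop :=
  (∀ x, (T.G.neighborSet (T.leaf x)).ncard = 1) ∧
  ∀ v : T.V, v ∉ Set.range T.leaf → 3 ≤ (T.G.neighborSet v).ncard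

def CovByIn {α : Type*} (F : Set (Set α)) (A B : Set α) : Prop :=
  A ⊂ B ∧ ∀ C ∈ F, A ⊂ C → ¬C ⊂ B

lemma covByIn_image_iff {α β : Type*} {F : Set (Set α)} {f : Set α → Set β}
    (hf : ∀ S ∈ F, ∀ S' ∈ F, f S ⊆ f S' ↔ S ⊆ S') {A B : Set α} (hA : A ∈ F) (hB : B ∈ F) :
    CovByIn (f '' F) (f A) (f B) ↔ CovByIn F A B := by
  have hss : ∀ S ∈ F, ∀ S' ∈ F, f S ⊂ f S' ↔ S ⊂ S' := fun S hS S' hS' => by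
    simp only [ssubset_iff_subset_not_subset, hf S hS S' hS', hf S' hS' S hS]
  simp only [CovByIn, Set.forall_mem_image, hss A hA B hB]
  exact and_congr_right fun _ => forall₂_congr fun C hC => by rw [hss A hA C hC, hss C hC B hB]

namespace SimpleGraph

variable {V : Type*} {G : SimpleGraph V} {a b c t u v w x y z z' : V}

theorem IsAcyclic.exists_reachable_subsingleton_neighborSet [Fintype V] (hG : G.IsAcyclic)
    (p : V) : ∃ w, G.Reachable p w ∧ (G.neighborSet w).Subsingleton ∧
      (w = p → G.neighborSet w = ∅) := by
  classical
  set lengths := {n | ∃ w, ∃ q : G.Walk p w, q.IsPath ∧ q.length = n}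
  have hfin : lengths.Finite :=
    (Set.finite_Iio (Fintype.card V)).subset fun _ ⟨_, _, hq, hn⟩ => hn ▸ hq.length_lt
  obtain ⟨_, ⟨w, q, hq, rfl⟩, hmax⟩ := hfin.exists_maximal ⟨0, p, .nil, .nil, rfl⟩
  -- a longest path from `p` cannot be extended, so every neighbour of its end precedes the end
  have hnbr : ∀ a, G.Adj w a → a = q.penultimate ∧ a ∈ q.support := fun a ha => by
    by_contra hna
    have hs : a ∉ q.support := fun hs => hna ⟨hG.eq_penultimate_of_adj_end hq ha hs, hs⟩
    have := hmax ⟨a, q.concat ha, hq.concat hs ha, rfl⟩ (by simp)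
    simp at this
  refine ⟨w, ⟨q⟩, fun a ha b hb => (hnbr a ha).1.trans (hnbr b hb).1.symm, ?_⟩
  rintro rfl
  rw [(Walk.isPath_iff_nil.1 hq).eq_nil] at hnbr
  exact Set.eq_empty_of_forall_notMem fun a ha => by
    obtain rfl : a = w := by simpa using (hnbr a ha).2
    exact G.irrefl ha

def edgeSide (G : SimpleGraph V) (u v : V) : Set V :=
  {z | (G.deleteEdges {s(u, v)}).Reachable v z}

def edgeSides (G : SimpleGraph V) : Set (Set V) :=
  {S | ∃ u v, G.Adj u v ∧ G.edgeSide u v = S}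

lemma mem_edgeSide_self (u v : V) : v ∈ G.edgeSide u v := Reachable.refl v

lemma mem_edgeSide_of_adj (hz : z ∈ G.edgeSide u v) (h : G.Adj z z')
    (hne : s(z, z') ≠ s(u, v)) : z' ∈ G.edgeSide u v :=
  hz.trans (Adj.reachable (deleteEdges_adj.2 ⟨h, hne⟩))

lemma edgeSide_subset_of_forall_adj {S : Set V} (hv : v ∈ S)
    (hS : ∀ z ∈ S, ∀ z', G.Adj z z' → s(z, z') ≠ s(u, v) → z' ∈ S) : G.edgeSide u v ⊆ S := by
  rintro z ⟨p⟩
  by_contra hz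
  obtain ⟨d, -, hd, hd'⟩ := p.exists_boundary_dart S hv hz
  have hadj := deleteEdges_adj.1 d.adj
  exact hd' (hS _ hd _ hadj.1 hadj.2)

lemma apply_eq_of_mem_edgeSide {α : Type*} {g : V → α}
    (hg : ∀ a b, G.Adj a b → s(a, b) ≠ s(u, v) → g a = g b) (hz : z ∈ G.edgeSide u v) :
    g z = g v :=
  edgeSide_subset_of_forall_adj (S := {z | g z = g v}) rfl
    (fun _ hz _ hzz' hne => (hg _ _ hzz' hne).symm.trans hz) hz

lemma mem_edgeSide_or_mem_edgeSide_of_adj (hz : z ∈ G.edgeSide u v) (h : G.Adj z z') :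
    z' ∈ G.edgeSide u v ∨ z' ∈ G.edgeSide v u := by
  by_cases he : s(z, z') = s(u, v)
  · rcases Sym2.eq_iff.1 he with ⟨-, rfl⟩ | ⟨-, rfl⟩
    · exact Or.inl (mem_edgeSide_self _ _)
    · exact Or.inr (mem_edgeSide_self _ _)
  · exact Or.inl (mem_edgeSide_of_adj hz h he)

lemma Connected.edgeSide_union (hG : G.Connected) (u v : V) :
    G.edgeSide u v ∪ G.edgeSide v u = Set.univ := by
  refine Set.eq_univ_of_forall fun z => ?_
  obtain ⟨p⟩ := hG.preconnected v z
  by_contra hz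
  obtain ⟨d, -, hd, hd'⟩ := p.exists_boundary_dart _ (Or.inl (mem_edgeSide_self u v)) hz
  rcases hd with hd | hd
  · exact hd' (mem_edgeSide_or_mem_edgeSide_of_adj hd d.adj)
  · exact hd' (mem_edgeSide_or_mem_edgeSide_of_adj hd d.adj).symm

lemma IsAcyclic.notMem_edgeSide (hG : G.IsAcyclic) (h : G.Adj u v) : u ∉ G.edgeSide u v :=
  fun hu => isBridge_iff.1 (isAcyclic_iff_forall_adj_isBridge.1 hG h) hu.symm

lemma IsAcyclic.disjoint_edgeSide (hG : G.IsAcyclic) (h : G.Adj u v) :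
    Disjoint (G.edgeSide u v) (G.edgeSide v u) := by
  refine Set.disjoint_left.2 fun z hzv hzu => hG.notMem_edgeSide h ?_
  rw [edgeSide, Sym2.eq_swap] at hzu
  exact hzv.trans hzu.symm

lemma IsTree.compl_edgeSide (hG : G.IsTree) (h : G.Adj u v) :
    (G.edgeSide u v)ᶜ = G.edgeSide v u :=
  IsCompl.compl_eq ⟨hG.isAcyclic.disjoint_edgeSide h,
    codisjoint_iff.2 (hG.connected.edgeSide_union u v)⟩

lemma IsAcyclic.eq_of_adj_of_notMem_of_mem (hG : G.IsAcyclic) (htc : G.Adj t c)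
    (h : G.Adj z z') (hz : z ∉ G.edgeSide t c) (hz' : z' ∈ G.edgeSide t c) : z = t ∧ z' = c := by
  have he : s(z', z) = s(t, c) := by
    by_contra he
    exact hz (mem_edgeSide_of_adj hz' h.symm he)
  rcases Sym2.eq_iff.1 he with ⟨rfl, rfl⟩ | ⟨rfl, rfl⟩
  · exact absurd hz' (hG.notMem_edgeSide htc)
  · exact ⟨rfl, rfl⟩

lemma IsAcyclic.eq_and_eq_of_edgeSide_eq (hG : G.IsAcyclic) (htc : G.Adj t c)
    (hxy : G.Adj x y) (h : G.edgeSide t c = G.edgeSide x y) : t = x ∧ c = y :=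
  hG.eq_of_adj_of_notMem_of_mem hxy htc (h ▸ hG.notMem_edgeSide htc)
    (h ▸ mem_edgeSide_self t c)

lemma IsAcyclic.edgeSide_subset_edgeSide (hG : G.IsAcyclic) (h : G.Adj x y)
    (hy : y ∈ G.edgeSide u v) (hu : u ∈ G.edgeSide y x) : G.edgeSide x y ⊆ G.edgeSide u v := by
  -- the union is closed under every step that does not cross `xy`
  have hsub : G.edgeSide x y ⊆ G.edgeSide u v ∪ G.edgeSide y x := by
    refine edgeSide_subset_of_forall_adj (Or.inl hy) ?_
    rintro z (hz | hz) z' hzz' hne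
    · by_cases he : s(z, z') = s(u, v)
      · rcases Sym2.eq_iff.1 he with ⟨-, rfl⟩ | ⟨-, rfl⟩
        · exact Or.inl (mem_edgeSide_self _ _)
        · exact Or.inr hu
      · exact Or.inl (mem_edgeSide_of_adj hz hzz' he)
    · exact Or.inr (mem_edgeSide_of_adj hz hzz' (by rwa [Sym2.eq_swap (a := y)]))
  exact fun z hz => (hsub hz).resolve_right (Set.disjoint_left.1 (hG.disjoint_edgeSide h) hz)

lemma IsAcyclic.edgeSide_subset_edgeSide_of_adj (hG : G.IsAcyclic) (hva : G.Adj v a)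
    (hvb : G.Adj v b) (hab : a ≠ b) : G.edgeSide v a ⊆ G.edgeSide b v :=
  hG.edgeSide_subset_edgeSide hva
    (mem_edgeSide_of_adj (mem_edgeSide_self b v) hva (by simp [hab, hva.ne']))
    (mem_edgeSide_of_adj (mem_edgeSide_self a v) hvb (by simp [hab.symm, hvb.ne']))

lemma IsAcyclic.eq_of_edgeSide_subset (hG : G.IsAcyclic) (hva : G.Adj v a) (hvb : G.Adj v b)
    (h : G.edgeSide v a ⊆ G.edgeSide v b) : a = b := by
  by_contra hab
  exact Set.disjoint_left.1 (hG.disjoint_edgeSide hvb) (h (mem_edgeSide_self v a))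
    (hG.edgeSide_subset_edgeSide_of_adj hva hvb hab (mem_edgeSide_self v a))

lemma IsAcyclic.edgeSide_ssubset_of_adj (hG : G.IsAcyclic) (hbv : G.Adj b v) (hva : G.Adj v a)
    (hab : a ≠ b) : G.edgeSide v a ⊂ G.edgeSide b v :=
  (Set.ssubset_iff_of_subset (hG.edgeSide_subset_edgeSide_of_adj hva hbv.symm hab)).2
    ⟨v, mem_edgeSide_self b v, hG.notMem_edgeSide hva⟩

lemma Connected.exists_adj_mem_edgeSide (hG : G.Connected) (hvw : v ≠ w) :
    ∃ m, G.Adj v m ∧ w ∈ G.edgeSide v m := by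
  obtain ⟨p, hp⟩ := hG.exists_isPath v w
  cases p with
  | nil => exact absurd rfl hvw
  | cons h q =>
    refine ⟨_, h, ⟨q.toDeleteEdges {s(v, _)} ?_⟩⟩
    rintro e he rfl
    exact ((Walk.cons_isPath_iff h q).1 hp).2 (q.fst_mem_support_of_mem_edges he)

lemma IsAcyclic.not_ssubset_edgeSide_of_ssubset (hG : G.IsAcyclic) (hbv : G.Adj b v)
    (hva : G.Adj v a) (htc : G.Adj t c) (h : G.edgeSide v a ⊂ G.edgeSide t c) :
    ¬G.edgeSide t c ⊂ G.edgeSide b v := by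
  intro h'
  by_cases hv : v ∈ G.edgeSide t c
  · have hb : b ∉ G.edgeSide t c := fun hb => hG.notMem_edgeSide hbv (h'.subset hb)
    obtain ⟨rfl, rfl⟩ := hG.eq_of_adj_of_notMem_of_mem htc hbv hb hv
    exact h'.ne rfl
  · obtain ⟨rfl, rfl⟩ :=
      hG.eq_of_adj_of_notMem_of_mem htc hva hv (h.subset (mem_edgeSide_self v a))
    exact h.ne rfl

lemma IsTree.eq_of_covByIn_edgeSides (hG : G.IsTree) (hva : G.Adj v a) (hbw : G.Adj b w)
    (h : CovByIn G.edgeSides (G.edgeSide v a) (G.edgeSide b w)) : w = v := by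
  have hA := hG.isAcyclic
  obtain ⟨hlt, hmin⟩ := h
  have hv : v ∈ G.edgeSide b w := by
    by_contra hv
    obtain ⟨rfl, rfl⟩ :=
      hA.eq_of_adj_of_notMem_of_mem hbw hva hv (hlt.subset (mem_edgeSide_self v a))
    exact hlt.ne rfl
  by_contra hwv
  -- the edge `m → v` pointing from `w` towards `v` lies strictly between
  obtain ⟨m, hvm, hwm⟩ := hG.connected.exists_adj_mem_edgeSide (Ne.symm hwv)
  have ham : a ≠ m := by
    rintro rfl
    have hb : b ∉ G.edgeSide v a := fun hb => hA.notMem_edgeSide hbw (hlt.subset hb)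
    obtain ⟨rfl, rfl⟩ := hA.eq_of_adj_of_notMem_of_mem hva hbw hb hwm
    exact hlt.ne rfl
  have hbm : b ∈ G.edgeSide v m := by
    by_contra hb
    obtain ⟨rfl, rfl⟩ := hA.eq_of_adj_of_notMem_of_mem hvm hbw hb hwm
    obtain rfl := hA.eq_of_edgeSide_subset hva hvm hlt.subset
    exact hlt.ne rfl
  refine hmin _ ⟨m, v, hvm.symm, rfl⟩ (hA.edgeSide_ssubset_of_adj hvm.symm hva ham) ?_
  refine (Set.ssubset_iff_of_subset (hA.edgeSide_subset_edgeSide hvm.symm hv hbm)).2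
    ⟨w, mem_edgeSide_self b w, Set.disjoint_right.1 (hA.disjoint_edgeSide hvm.symm) hwm⟩

theorem IsTree.covByIn_edgeSides_iff (hG : G.IsTree) (hva : G.Adj v a) (hbw : G.Adj b w) :
    CovByIn G.edgeSides (G.edgeSide v a) (G.edgeSide b w) ↔ w = v ∧ a ≠ b := by
  refine ⟨fun h => ?_, ?_⟩
  · obtain rfl := hG.eq_of_covByIn_edgeSides hva hbw h
    refine ⟨rfl, ?_⟩
    rintro rfl
    exact hG.isAcyclic.notMem_edgeSide hva.symm (h.1.subset (mem_edgeSide_self w a))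
  · rintro ⟨rfl, hab⟩
    refine ⟨hG.isAcyclic.edgeSide_ssubset_of_adj hbw hva hab, ?_⟩
    rintro _ ⟨t, c, htc, rfl⟩
    exact hG.isAcyclic.not_ssubset_edgeSide_of_ssubset hbw hva htc

end SimpleGraph

namespace PhyloTree

open SimpleGraph

variable {X C : Type} {T T₁ T₂ : PhyloTree X} {a b c t u v w : T.V}

instance (T : PhyloTree X) : Fintype T.V := T.fintypeV

lemma isTree (T : PhyloTree X) : T.G.IsTree := ⟨T.connected, T.acyclic⟩

def sideTaxa (T : PhyloTree X) (u v : T.V) : Set X := T.leaf ⁻¹' T.G.edgeSide u v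

def splits (T : PhyloTree X) : Set (Set X) := (T.leaf ⁻¹' ·) '' T.G.edgeSides

lemma mem_splits {A : Set X} : A ∈ T.splits ↔ ∃ u v, T.G.Adj u v ∧ T.sideTaxa u v = A := by
  simp [splits, edgeSides, sideTaxa]

lemma sideTaxa_mem_splits (h : T.G.Adj u v) : T.sideTaxa u v ∈ T.splits :=
  mem_splits.2 ⟨u, v, h, rfl⟩

lemma compl_sideTaxa (h : T.G.Adj u v) : (T.sideTaxa u v)ᶜ = T.sideTaxa v u := by
  rw [sideTaxa, ← Set.preimage_compl, T.isTree.compl_edgeSide h, sideTaxa]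

lemma IsPhylo.exists_adj (hT : T.IsPhylo) (v : T.V) : ∃ a, T.G.Adj v a := by
  have : (T.G.neighborSet v).ncard ≠ 0 := by
    by_cases hv : v ∈ Set.range T.leaf
    · obtain ⟨x, rfl⟩ := hv
      rw [hT.1 x]
      exact one_ne_zero
    · have := hT.2 v hv
      omega
  exact Set.nonempty_of_ncard_ne_zero this

lemma IsPhylo.mem_range_leaf_of_ncard_neighborSet_le_two (hT : T.IsPhylo)
    (h : (T.G.neighborSet v).ncard ≤ 2) : v ∈ Set.range T.leaf := by
  by_contra hv
  have := hT.2 v hv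
  omega

/-- The far end of a longest path from `v` avoiding both edges has degree at most two in `T`,
so it is a labelled leaf. -/
theorem IsPhylo.exists_leaf_mem_edgeSide_inter (hT : T.IsPhylo) (htc : T.G.Adj t c)
    (huv : T.G.Adj u v) (hv : v ∈ T.G.edgeSide t c) :
    ∃ x, T.leaf x ∈ T.G.edgeSide t c ∩ T.G.edgeSide u v := by
  set H := T.G.deleteEdges {s(t, c), s(u, v)}
  have hH : H.IsAcyclic := T.acyclic.anti (T.G.deleteEdges_le _)
  obtain ⟨w, hvw, hsub, hw⟩ := hH.exists_reachable_subsingleton_neighborSet v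
  have hwtc : w ∈ T.G.edgeSide t c := hv.trans (hvw.mono (T.G.deleteEdges_anti (by simp)))
  have hwuv : w ∈ T.G.edgeSide u v := hvw.mono (T.G.deleteEdges_anti (by simp))
  have hadj : ∀ z, T.G.Adj w z → z ∈ H.neighborSet w ∨ z = t ∨ (w = v ∧ z = u) := by
    intro z hz
    by_cases he : s(w, z) = s(t, c) ∨ s(w, z) = s(u, v)
    · rcases he with he | he <;> rcases Sym2.eq_iff.1 he with ⟨rfl, rfl⟩ | ⟨rfl, rfl⟩
      · exact absurd hwtc (T.acyclic.notMem_edgeSide htc)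
      · exact Or.inr (Or.inl rfl)
      · exact absurd hwuv (T.acyclic.notMem_edgeSide huv)
      · exact Or.inr (Or.inr ⟨rfl, rfl⟩)
    · exact Or.inl (deleteEdges_adj.2 ⟨hz, by simpa using he⟩)
  have hdeg : (T.G.neighborSet w).ncard ≤ 2 := by
    by_cases hwv : w = v
    · calc (T.G.neighborSet w).ncard ≤ ({t, u} : Set T.V).ncard := by
            refine Set.ncard_le_ncard (fun z hz => ?_) (Set.toFinite _)
            rcases hadj z hz with hz | rfl | ⟨-, rfl⟩
            · exact absurd hz (by rw [hw hwv]; exact Set.notMem_empty z)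
            · exact Or.inl rfl
            · exact Or.inr rfl
        _ ≤ 2 := (Set.ncard_insert_le _ _).trans (by simp)
    · calc (T.G.neighborSet w).ncard ≤ (insert t (H.neighborSet w)).ncard := by
            refine Set.ncard_le_ncard (fun z hz => ?_) (Set.toFinite _)
            rcases hadj z hz with hz | rfl | ⟨hwv', -⟩
            · exact Or.inr hz
            · exact Or.inl rfl
            · exact absurd hwv' hwv
        _ ≤ (H.neighborSet w).ncard + 1 := Set.ncard_insert_le _ _
        _ ≤ 2 := by have := Set.ncard_le_one_iff_subsingleton.2 hsub; omega
  obtain ⟨x, rfl⟩ := hT.mem_range_leaf_of_ncard_neighborSet_le_two hdeg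
  exact ⟨x, hwtc, hwuv⟩

theorem IsPhylo.sideTaxa_subset_sideTaxa_iff (hT : T.IsPhylo) (htc : T.G.Adj t c)
    (huv : T.G.Adj u v) :
    T.sideTaxa t c ⊆ T.sideTaxa u v ↔ T.G.edgeSide t c ⊆ T.G.edgeSide u v := by
  refine ⟨fun h => ?_, fun h => Set.preimage_mono h⟩
  by_contra hsub
  rcases (Set.ext_iff.1 (T.connected.edgeSide_union v u) c).2 trivial with hc | hc
  · obtain ⟨x, hx, hx'⟩ := hT.exists_leaf_mem_edgeSide_inter huv.symm htc hc
    exact Set.disjoint_right.1 (T.acyclic.disjoint_edgeSide huv) hx (h hx')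
  · have hu : u ∈ T.G.edgeSide t c := by
      by_contra hu
      rw [← Set.mem_compl_iff, T.isTree.compl_edgeSide htc] at hu
      exact hsub (T.acyclic.edgeSide_subset_edgeSide htc hc hu)
    obtain ⟨x, hx, hx'⟩ := hT.exists_leaf_mem_edgeSide_inter htc huv.symm hu
    exact Set.disjoint_right.1 (T.acyclic.disjoint_edgeSide huv) hx' (h hx)

lemma IsPhylo.eq_and_eq_of_sideTaxa_eq (hT : T.IsPhylo) (htc : T.G.Adj t c)
    (huv : T.G.Adj u v) (h : T.sideTaxa t c = T.sideTaxa u v) : t = u ∧ c = v :=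
  T.acyclic.eq_and_eq_of_edgeSide_eq htc huv (subset_antisymm
    ((hT.sideTaxa_subset_sideTaxa_iff htc huv).1 h.subset)
    ((hT.sideTaxa_subset_sideTaxa_iff huv htc).1 h.symm.subset))

lemma IsPhylo.sideTaxa_nonempty (hT : T.IsPhylo) (h : T.G.Adj u v) :
    (T.sideTaxa u v).Nonempty := by
  obtain ⟨x, hx, -⟩ := hT.exists_leaf_mem_edgeSide_inter h h (mem_edgeSide_self u v)
  exact ⟨x, hx⟩

lemma IsPhylo.sideTaxa_leaf (hT : T.IsPhylo) (x : X) (h : T.G.Adj (T.leaf x) a) :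
    T.sideTaxa (T.leaf x) a = {x}ᶜ := by
  obtain ⟨a₀, ha₀⟩ := Set.ncard_eq_one.1 (hT.1 x)
  have hnbr : ∀ z, T.G.Adj (T.leaf x) z → z = a₀ := fun z hz => (Set.ext_iff.1 ha₀ z).1 hz
  have hside : T.G.edgeSide a (T.leaf x) ⊆ {T.leaf x} := by
    refine edgeSide_subset_of_forall_adj rfl ?_
    rintro _ rfl z hz hne
    exact absurd (by rw [hnbr z hz, ← hnbr a h, Sym2.eq_swap]) hne
  rw [← compl_sideTaxa h.symm, compl_inj_iff]
  exact subset_antisymm (fun y hy => T.leaf.injective (hside hy))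
    (Set.singleton_subset_iff.2 (mem_edgeSide_self a (T.leaf x)))

lemma isExtension_extend (T : PhyloTree X) (f : X → C) (g₀ : T.V → C) :
    T.IsExtension f (Function.extend T.leaf f g₀) :=
  fun x => T.leaf.injective.extend_apply f g₀ x

lemma score_le_mutCount {f : X → C} {g : T.V → C} (hg : T.IsExtension f g) :
    T.score f ≤ T.mutCount g :=
  Nat.sInf_le ⟨g, hg, rfl⟩

lemma exists_mutCount_eq_score [Nonempty C] (T : PhyloTree X) (f : X → C) :
    ∃ g, T.IsExtension f g ∧ T.mutCount g = T.score f := by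
  have : {n | ∃ g, T.IsExtension f g ∧ T.mutCount g = n}.Nonempty :=
    ⟨_, _, T.isExtension_extend f fun _ => Classical.arbitrary C, rfl⟩
  exact Nat.sInf_mem this

lemma mutCount_le_ncard_edgeSet (g : T.V → C) : T.mutCount g ≤ T.G.edgeSet.ncard :=
  Set.ncard_le_ncard (fun _ he => he.1) (Set.toFinite _)

lemma score_le_ncard_edgeSet [Nonempty C] (f : X → C) : T.score f ≤ T.G.edgeSet.ncard := by
  obtain ⟨g, -, hg⟩ := T.exists_mutCount_eq_score f
  exact hg ▸ mutCount_le_ncard_edgeSet g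

lemma one_le_score [Nonempty C] {f : X → C} {x y : X} (hxy : f x ≠ f y) : 1 ≤ T.score f := by
  obtain ⟨g, hg, hscore⟩ := T.exists_mutCount_eq_score f
  obtain ⟨p⟩ := T.connected.preconnected (T.leaf x) (T.leaf y)
  obtain ⟨d, -, hd₁, hd₂⟩ := p.exists_boundary_dart {z | g z = f x} (hg x)
    (by simpa [hg y] using hxy.symm)
  rw [← hscore]
  exact (Set.ncard_pos (Set.toFinite _)).2
    ⟨d.edge, d.edge_mem, d.fst, d.snd, rfl, fun h => hd₂ (h.symm.trans hd₁)⟩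

lemma mutCount_indicator_edgeSide (h : T.G.Adj u v) :
    T.mutCount ((T.G.edgeSide u v).indicator (1 : T.V → ℕ)) = 1 := by
  rw [mutCount, Set.ncard_eq_one]
  refine ⟨s(u, v), Set.eq_singleton_iff_unique_mem.2 ⟨⟨h, u, v, rfl, ?_⟩, ?_⟩⟩
  · simp [T.acyclic.notMem_edgeSide h, mem_edgeSide_self]
  rintro _ ⟨hzz', z, z', rfl, hne⟩
  by_cases hz : z ∈ T.G.edgeSide u v <;> by_cases hz' : z' ∈ T.G.edgeSide u v <;>
    simp [hz, hz'] at hne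
  · obtain ⟨rfl, rfl⟩ := T.acyclic.eq_of_adj_of_notMem_of_mem h hzz'.symm hz' hz
    exact Sym2.eq_swap
  · obtain ⟨rfl, rfl⟩ := T.acyclic.eq_of_adj_of_notMem_of_mem h hzz' hz hz'
    rfl

theorem IsPhylo.score_indicator_sideTaxa (hT : T.IsPhylo) (h : T.G.Adj u v) :
    T.score ((T.sideTaxa u v).indicator (1 : X → ℕ)) = 1 := by
  obtain ⟨x, hx⟩ := hT.sideTaxa_nonempty h
  obtain ⟨y, hy⟩ := hT.sideTaxa_nonempty h.symm
  rw [← compl_sideTaxa h, Set.mem_compl_iff] at hy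
  refine le_antisymm ?_ (one_le_score (x := x) (y := y) (by simp [hx, hy]))
  refine (score_le_mutCount fun z => ?_).trans (mutCount_indicator_edgeSide h).le
  by_cases hz : T.leaf z ∈ T.G.edgeSide u v <;> simp [sideTaxa, hz]

lemma exists_adj_forall_eq_iff_of_mutCount_eq_one {g : T.V → C} (hg : T.mutCount g = 1) :
    ∃ u v, T.G.Adj u v ∧ ∀ z, g z = g v ↔ z ∈ T.G.edgeSide u v := by
  obtain ⟨e, he⟩ := Set.ncard_eq_one.1 hg
  obtain ⟨huv, u, v, rfl, hne⟩ : e ∈ {e | e ∈ T.G.edgeSet ∧ ∃ a b, e = s(a, b) ∧ g a ≠ g b} :=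
    he ▸ rfl
  have hconst : ∀ a b, T.G.Adj a b → s(a, b) ≠ s(u, v) → g a = g b := fun a b hab hab' => by
    by_contra hgab
    exact hab' ((Set.ext_iff.1 he _).1 ⟨hab, a, b, rfl, hgab⟩)
  refine ⟨u, v, huv, fun z => ⟨fun hz => ?_, apply_eq_of_mem_edgeSide hconst⟩⟩
  by_contra hz'
  rw [← Set.mem_compl_iff, T.isTree.compl_edgeSide huv] at hz'
  refine hne ((apply_eq_of_mem_edgeSide (fun a b hab hab' => hconst a b hab ?_) hz').symm.trans hz)
  rwa [Sym2.eq_swap (a := u)]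

theorem IsPhylo.mem_splits_of_score_eq_one (hT : T.IsPhylo) {A : Set X}
    (h : T.score (A.indicator (1 : X → ℕ)) = 1) : A ∈ T.splits := by
  obtain ⟨g, hg, hmut⟩ := T.exists_mutCount_eq_score (A.indicator (1 : X → ℕ))
  obtain ⟨u, v, huv, hside⟩ := exists_adj_forall_eq_iff_of_mutCount_eq_one (hmut.trans h)
  have hlevel : {x | A.indicator 1 x = g v} = T.sideTaxa u v :=
    Set.ext fun x => (hg x ▸ hside (T.leaf x) :)
  obtain ⟨x, hx⟩ := hT.sideTaxa_nonempty huv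
  rw [← hlevel] at hx
  change A.indicator 1 x = g v at hx
  by_cases hxA : x ∈ A
  · refine mem_splits.2 ⟨u, v, huv, ?_⟩
    rw [← hlevel, ← hx, Set.indicator_of_mem hxA]
    ext z
    by_cases hz : z ∈ A <;> simp [hz]
  · refine mem_splits.2 ⟨v, u, huv.symm, ?_⟩
    rw [← compl_sideTaxa huv, ← hlevel, ← hx, Set.indicator_of_notMem hxA]
    ext z
    by_cases hz : z ∈ A <;> simp [hz]

theorem IsPhylo.mem_splits_iff (hT : T.IsPhylo) {A : Set X} :
    A ∈ T.splits ↔ T.score (A.indicator (1 : X → ℕ)) = 1 := by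
  refine ⟨fun hA => ?_, hT.mem_splits_of_score_eq_one⟩
  obtain ⟨u, v, huv, rfl⟩ := mem_splits.1 hA
  exact hT.score_indicator_sideTaxa huv

lemma splits_eq_of_forall_score_eq (h₁ : T₁.IsPhylo) (h₂ : T₂.IsPhylo)
    (h : ∀ f : X → ℕ, T₁.score f = T₂.score f) : T₁.splits = T₂.splits :=
  Set.ext fun _ => by rw [h₁.mem_splits_iff, h₂.mem_splits_iff, h]

theorem IsPhylo.covByIn_sideTaxa_iff (hT : T.IsPhylo) (hva : T.G.Adj v a) (hbw : T.G.Adj b w) :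
    CovByIn T.splits (T.sideTaxa v a) (T.sideTaxa b w) ↔ w = v ∧ a ≠ b := by
  refine (covByIn_image_iff (F := T.G.edgeSides) (f := (T.leaf ⁻¹' ·)) ?_ ⟨v, a, hva, rfl⟩
    ⟨b, w, hbw, rfl⟩).trans (T.isTree.covByIn_edgeSides_iff hva hbw)
  rintro _ ⟨t, c, htc, rfl⟩ _ ⟨u, u', huu', rfl⟩
  exact hT.sideTaxa_subset_sideTaxa_iff htc huu'

theorem IsPhylo.eq_iff_of_adj (hT : T.IsPhylo) (hva : T.G.Adj v a) (hwb : T.G.Adj w b) :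
    v = w ↔ T.sideTaxa v a = T.sideTaxa w b ∨
      CovByIn T.splits (T.sideTaxa w b) (T.sideTaxa v a)ᶜ := by
  rw [compl_sideTaxa hva, hT.covByIn_sideTaxa_iff hwb hva.symm]
  constructor
  · rintro rfl
    by_cases hba : b = a
    · exact Or.inl (hba ▸ rfl)
    · exact Or.inr ⟨rfl, hba⟩
  · rintro (h | ⟨h, -⟩)
    · exact (hT.eq_and_eq_of_sideTaxa_eq hva hwb h).1
    · exact h

def Corresponds (T₁ T₂ : PhyloTree X) (v : T₁.V) (w : T₂.V) : Prop :=
  ∃ a c, T₁.G.Adj v a ∧ T₂.G.Adj w c ∧ T₁.sideTaxa v a = T₂.sideTaxa w c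

lemma Corresponds.symm {v : T₁.V} {w : T₂.V} (h : Corresponds T₁ T₂ v w) :
    Corresponds T₂ T₁ w v :=
  let ⟨a, c, hva, hwc, he⟩ := h
  ⟨c, a, hwc, hva, he.symm⟩

lemma Corresponds.eq_iff (h₁ : T₁.IsPhylo) (h₂ : T₂.IsPhylo) (hsp : T₁.splits = T₂.splits)
    {v v' : T₁.V} {w w' : T₂.V} (h : Corresponds T₁ T₂ v w) (h' : Corresponds T₁ T₂ v' w') :
    v = v' ↔ w = w' := by
  obtain ⟨a, c, hva, hwc, he⟩ := h
  obtain ⟨a', c', hva', hwc', he'⟩ := h'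
  rw [h₁.eq_iff_of_adj hva hva', h₂.eq_iff_of_adj hwc hwc', he, he', hsp]

lemma exists_corresponds (h₁ : T₁.IsPhylo) (hsp : T₁.splits ⊆ T₂.splits) (v : T₁.V) :
    ∃ w, Corresponds T₁ T₂ v w := by
  obtain ⟨a, hva⟩ := h₁.exists_adj v
  obtain ⟨w, c, hwc, he⟩ := mem_splits.1 (hsp (sideTaxa_mem_splits hva))
  exact ⟨w, a, c, hva, hwc, he.symm⟩

lemma exists_adj_corresponds (hsp : T₁.splits ⊆ T₂.splits) {u v : T₁.V}
    (huv : T₁.G.Adj u v) : ∃ w c, T₂.G.Adj w c ∧ Corresponds T₁ T₂ u w ∧ Corresponds T₁ T₂ v c := by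
  obtain ⟨w, c, hwc, he⟩ := mem_splits.1 (hsp (sideTaxa_mem_splits huv))
  refine ⟨w, c, hwc, ⟨v, c, huv, hwc, he.symm⟩, ⟨u, w, huv.symm, hwc.symm, ?_⟩⟩
  rw [← compl_sideTaxa huv, ← compl_sideTaxa hwc, he]

lemma corresponds_leaf (h₁ : T₁.IsPhylo) (h₂ : T₂.IsPhylo) (x : X) :
    Corresponds T₁ T₂ (T₁.leaf x) (T₂.leaf x) := by
  obtain ⟨a, ha⟩ := h₁.exists_adj (T₁.leaf x)
  obtain ⟨c, hc⟩ := h₂.exists_adj (T₂.leaf x)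
  exact ⟨a, c, ha, hc, by rw [h₁.sideTaxa_leaf x ha, h₂.sideTaxa_leaf x hc]⟩

theorem isom_of_splits_eq (h₁ : T₁.IsPhylo) (h₂ : T₂.IsPhylo) (hsp : T₁.splits = T₂.splits) :
    T₁.Isom T₂ := by
  choose φ hφ using exists_corresponds h₁ hsp.subset
  have hφ_eq {v w} (h : Corresponds T₁ T₂ v w) : φ v = w := ((hφ v).eq_iff h₁ h₂ hsp h).1 rfl
  have hinj : Function.Injective φ := fun v v' h => ((hφ v).eq_iff h₁ h₂ hsp (hφ v')).2 h
  have hsurj : Function.Surjective φ := fun w =>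
    let ⟨v, hv⟩ := exists_corresponds h₂ hsp.symm.subset w
    ⟨v, hφ_eq hv.symm⟩
  refine ⟨Equiv.ofBijective φ ⟨hinj, hsurj⟩, fun u v => ⟨fun h => ?_, fun h => ?_⟩,
    fun x => hφ_eq (corresponds_leaf h₁ h₂ x)⟩
  · obtain ⟨w, c, hwc, hu, hv⟩ := exists_adj_corresponds hsp.subset h
    show T₂.G.Adj (φ u) (φ v)
    rwa [hφ_eq hu, hφ_eq hv]
  · obtain ⟨u', v', h', hu, hv⟩ := exists_adj_corresponds hsp.symm.subset h
    rwa [hinj (hφ_eq hu.symm), hinj (hφ_eq hv.symm)] at h'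

lemma Isom.symm (h : T₁.Isom T₂) : T₂.Isom T₁ := by
  obtain ⟨e, hadj, hleaf⟩ := h
  refine ⟨e.symm, fun u v => ?_, fun x => ?_⟩
  · rw [hadj, e.apply_symm_apply, e.apply_symm_apply]
  · rw [← hleaf x, e.symm_apply_apply]

lemma mutCount_comp_equiv (e : T₁.V ≃ T₂.V)
    (hadj : ∀ u v, T₁.G.Adj u v ↔ T₂.G.Adj (e u) (e v)) (g : T₂.V → C) :
    T₁.mutCount (g ∘ e) = T₂.mutCount g := by
  rw [mutCount, mutCount, ← Set.ncard_image_of_injective _ (Sym2.map.injective e.injective)]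
  congr 1
  ext d
  constructor
  · rintro ⟨_, ⟨huv, u, v, rfl, hne⟩, rfl⟩
    exact ⟨(hadj u v).1 huv, e u, e v, rfl, hne⟩
  · rintro ⟨hd, u, v, rfl, hne⟩
    refine ⟨s(e.symm u, e.symm v), ⟨?_, _, _, rfl, by simpa using hne⟩, by simp⟩
    rw [mem_edgeSet, hadj, e.apply_symm_apply, e.apply_symm_apply]
    exact hd

lemma Isom.exists_mutCount_eq (h : T₁.Isom T₂) {f : X → C} {g : T₂.V → C}
    (hg : T₂.IsExtension f g) : ∃ g', T₁.IsExtension f g' ∧ T₁.mutCount g' = T₂.mutCount g := by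
  obtain ⟨e, hadj, hleaf⟩ := h
  exact ⟨g ∘ e, fun x => by rw [Function.comp_apply, hleaf, hg x],
    mutCount_comp_equiv e hadj g⟩

lemma Isom.score_eq (h : T₁.Isom T₂) (f : X → C) : T₁.score f = T₂.score f := by
  refine congrArg sInf (Set.ext fun n => ⟨?_, ?_⟩)
  · rintro ⟨g, hg, rfl⟩
    exact h.symm.exists_mutCount_eq hg
  · rintro ⟨g, hg, rfl⟩
    exact h.exists_mutCount_eq hg

theorem dMP_eq_zero_iff_forall_score_eq :
    dMP T₁ T₂ = 0 ↔ ∀ f : X → ℕ, T₁.score f = T₂.score f := by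
  have hbdd : BddAbove {n | ∃ f : X → ℕ, n = ((T₁.score f : ℤ) - T₂.score f).natAbs} := by
    refine ⟨T₁.G.edgeSet.ncard + T₂.G.edgeSet.ncard, ?_⟩
    rintro _ ⟨f, rfl⟩
    have := T₁.score_le_ncard_edgeSet f
    have := T₂.score_le_ncard_edgeSet f
    omega
  rw [dMP, ← nonpos_iff_eq_zero, csSup_le_iff hbdd ⟨_, fun _ => 0, rfl⟩]
  simp [sub_eq_zero]

end PhyloTree

theorem dMP_eq_zero_iff_general {X : Type} (T₁ T₂ : PhyloTree X)
    (h₁ : T₁.IsPhylo) (h₂ : T₂.IsPhylo) :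
    PhyloTree.dMP T₁ T₂ = 0 ↔ PhyloTree.Isom T₁ T₂ := by
  rw [PhyloTree.dMP_eq_zero_iff_forall_score_eq]
  refine ⟨fun h => ?_, fun h => h.score_eq⟩
  exact PhyloTree.isom_of_splits_eq h₁ h₂ (PhyloTree.splits_eq_of_forall_score_eq h₁ h₂ h)

/-- `d_MP(T₁,T₂) = 0` iff `T₁ = T₂` (up to isomorphism as `X`-trees). -/
theorem dMP_eq_zero_iff {X : Type} [Fintype X] (T₁ T₂ : PhyloTree X)
    (h₁ : T₁.IsPhylo) (h₂ : T₂.IsPhylo) :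
    PhyloTree.dMP T₁ T₂ = 0 ↔ PhyloTree.Isom T₁ T₂ :=
  dMP_eq_zero_iff_general T₁ T₂ h₁ h₂
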